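/- Lifting theorem: if S ⟹_r T is a derivation step with respect to a binary rule r and S' is a query more general than S (i.e. [S] ⊆ [S']), then there exists a derivation step S' ⟹_r T' such that T' is more general than T. -/

import Mathlib

/- A formalization of binary CLP(C): terms, constraints, queries, rules,
   derivation steps, loops, projections, filters, DN / DNlog / DNsyn. -/

namespace CLP

/-- First-order terms over a signature of function symbols `F` with arities `arF`. -/
inductive Tm (F : Type) (arF : F → ℕ) : Type
  | var : ℕ → Tm F arF
  | app : (f : F) → (Fin (arF f) → Tm F arF) → Tm F arF

variable {F : Type} {arF : F → ℕ} {Pc : Type} {arP : Pc → ℕ}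
  {Prd : Type} {arPrd : Prd → ℕ} {D : Type}

/-- Variables of a term. -/
def Tm.fv : Tm F arF → Finset ℕ
  | .var x => {x}
  | .app _ ts => Finset.univ.biUnion fun i => (ts i).fv

/-- Apply a variable substitution to a term. -/
def Tm.rename (σ : ℕ → ℕ) : Tm F arF → Tm F arF
  | .var x => .var (σ x)
  | .app f ts => .app f fun i => (ts i).rename σ

/-- Finite conjunctions of primitive constraints (including equality). -/
inductive Con (F : Type) (arF : F → ℕ) (Pc : Type) (arP : Pc → ℕ) : Type
  | tru : Con F arF Pc arP
  | eq : Tm F arF → Tm F arF → Con F arF Pc arP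
  | prim : (c : Pc) → (Fin (arP c) → Tm F arF) → Con F arF Pc arP
  | and : Con F arF Pc arP → Con F arF Pc arP → Con F arF Pc arP

/-- Variables of a constraint. -/
def Con.fv : Con F arF Pc arP → Finset ℕ
  | .tru => ∅
  | .eq s t => s.fv ∪ t.fv
  | .prim _ ts => Finset.univ.biUnion fun i => (ts i).fv
  | .and c d => c.fv ∪ d.fv

/-- Apply a variable substitution to a constraint. -/
def Con.rename (σ : ℕ → ℕ) : Con F arF Pc arP → Con F arF Pc arP
  | .tru => .tru
  | .eq s t => .eq (s.rename σ) (t.rename σ)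
  | .prim c ts => .prim c fun i => (ts i).rename σ
  | .and c d => .and (c.rename σ) (d.rename σ)

/-- The domain of computation `D_C`: an interpretation of the function and
constraint-predicate symbols over a domain `D`. -/
structure Interp (F : Type) (arF : F → ℕ) (Pc : Type) (arP : Pc → ℕ) (D : Type) where
  fn : (f : F) → (Fin (arF f) → D) → D
  pr : (c : Pc) → (Fin (arP c) → D) → Prop

/-- Evaluation of a term under a valuation `v : Var → D`. -/
def Tm.eval (If : (f : F) → (Fin (arF f) → D) → D) (v : ℕ → D) : Tm F arF → D
  | .var x => v x
  | .app f ts => If f fun i => (ts i).eval If v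

/-- `D_C ⊨_v c`. -/
def Con.Sat (I : Interp F arF Pc arP D) (v : ℕ → D) : Con F arF Pc arP → Prop
  | .tru => True
  | .eq s t => s.eval I.fn v = t.eval I.fn v
  | .prim c ts => I.pr c fun i => (ts i).eval I.fn v
  | .and c d => c.Sat I v ∧ d.Sat I v

/-- A query `⟨p(t̃) | d⟩`. -/
structure Query (F : Type) (arF : F → ℕ) (Pc : Type) (arP : Pc → ℕ)
    (Prd : Type) (arPrd : Prd → ℕ) where
  p : Prd
  args : Fin (arPrd p) → Tm F arF
  con : Con F arF Pc arP

/-- Variables of a query. -/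
def Query.fv (S : Query F arF Pc arP Prd arPrd) : Finset ℕ :=
  (Finset.univ.biUnion fun i => (S.args i).fv) ∪ S.con.fv

/-- Apply a variable substitution to a query. -/
def Query.rename (σ : ℕ → ℕ) (S : Query F arF Pc arP Prd arPrd) :
    Query F arF Pc arP Prd arPrd :=
  ⟨S.p, fun i => (S.args i).rename σ, S.con.rename σ⟩

/-- The set `[S]` of atoms (predicate applied to domain values) described by a query `S`. -/
def Query.set (I : Interp F arF Pc arP D) (S : Query F arF Pc arP Prd arPrd) :
    Set (Σ p : Prd, Fin (arPrd p) → D) :=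
  { a | ∃ v : ℕ → D, S.con.Sat I v ∧ a = ⟨S.p, fun i => (S.args i).eval I.fn v⟩ }

/-- `S'` is more general than `S` iff `[S] ⊆ [S']`. -/
def MoreGen (I : Interp F arF Pc arP D) (S' S : Query F arF Pc arP Prd arPrd) : Prop :=
  S.set I ⊆ S'.set I

/-- A binary rule `p(s̃) ← c ◇ q(t̃)`. -/
structure Rule (F : Type) (arF : F → ℕ) (Pc : Type) (arP : Pc → ℕ)
    (Prd : Type) (arPrd : Prd → ℕ) where
  hp : Prd
  hargs : Fin (arPrd hp) → Tm F arF
  con : Con F arF Pc arP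
  bp : Prd
  bargs : Fin (arPrd bp) → Tm F arF

/-- Variables of a rule. -/
def Rule.fv (r : Rule F arF Pc arP Prd arPrd) : Finset ℕ :=
  (Finset.univ.biUnion fun i => (r.hargs i).fv) ∪ r.con.fv ∪
    (Finset.univ.biUnion fun i => (r.bargs i).fv)

/-- Apply a variable substitution to a rule. -/
def Rule.rename (σ : ℕ → ℕ) (r : Rule F arF Pc arP Prd arPrd) : Rule F arF Pc arP Prd arPrd :=
  ⟨r.hp, fun i => (r.hargs i).rename σ, r.con.rename σ, r.bp, fun i => (r.bargs i).rename σ⟩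

/-- `r'` is a variant of `r`: obtained by renaming the variables by a bijection. -/
def Rule.IsVariant (r r' : Rule F arF Pc arP Prd arPrd) : Prop :=
  ∃ ρ : ℕ ≃ ℕ, r' = r.rename ρ

/-- The query `⟨H | c⟩` of a rule `H ← c ◇ B`. -/
def Rule.headQuery (r : Rule F arF Pc arP Prd arPrd) : Query F arF Pc arP Prd arPrd :=
  ⟨r.hp, r.hargs, r.con⟩

/-- The query `⟨B | c⟩` of a rule `H ← c ◇ B`. -/
def Rule.bodyQuery (r : Rule F arF Pc arP Prd arPrd) : Query F arF Pc arP Prd arPrd :=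
  ⟨r.bp, r.bargs, r.con⟩

/-- The constraint `ũ = w̃` for two sequences of terms. -/
def argsEqCon {n : ℕ} (u w : Fin n → Tm F arF) : Con F arF Pc arP :=
  (List.ofFn fun i => Con.eq (u i) (w i)).foldr .and .tru

/-- The constraint `s̃' = ũ ∧ c' ∧ d` of the query resulting from a derivation step of
`S = ⟨p(ũ) | d⟩` with input rule `r' = p(s̃') ← c' ◇ q(t̃')`. -/
def stepCon (r' : Rule F arF Pc arP Prd arPrd) (S : Query F arF Pc arP Prd arPrd)
    (h : r'.hp = S.p) : Con F arF Pc arP :=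
  Con.and
    (argsEqCon (fun i : Fin (arPrd S.p) => r'.hargs (Fin.cast (congrArg arPrd h).symm i)) S.args)
    (Con.and r'.con S.con)

/-- Derivation step of `S` using the (already renamed-apart) input rule `r'`:
the constraint `s̃' = ũ ∧ c' ∧ d` must be satisfiable in `D_C`, and the resulting
query is `⟨q(t̃') | s̃' = ũ ∧ c' ∧ d⟩`. -/
def StepWith (I : Interp F arF Pc arP D) (r' : Rule F arF Pc arP Prd arPrd)
    (S T : Query F arF Pc arP Prd arPrd) : Prop :=
  ∃ h : r'.hp = S.p, (∃ v : ℕ → D, (stepCon r' S h).Sat I v) ∧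
    T = ⟨r'.bp, r'.bargs, stepCon r' S h⟩

/-- Derivation step `S ⟹_r T`: there is a variant `r'` of `r`, variable disjoint
with `S`, which is an input rule for a step from `S` to `T`. -/
def Step (I : Interp F arF Pc arP D) (r : Rule F arF Pc arP Prd arPrd)
    (S T : Query F arF Pc arP Prd arPrd) : Prop :=
  ∃ r' : Rule F arF Pc arP Prd arPrd,
    r.IsVariant r' ∧ Disjoint r'.fv S.fv ∧ StepWith I r' S T

/-- `S₀` loops w.r.t. the program `P`: there is an infinite derivation of `P ∪ {S₀}`,
i.e. an infinite sequence of derivation steps whose input rules are variants of rules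
of `P`, variable disjoint from `S₀` and from the input rules used at earlier steps
(standardization apart). -/
def Loops (I : Interp F arF Pc arP D) (P : Set (Rule F arF Pc arP Prd arPrd))
    (S₀ : Query F arF Pc arP Prd arPrd) : Prop :=
  ∃ (S : ℕ → Query F arF Pc arP Prd arPrd) (rv : ℕ → Rule F arF Pc arP Prd arPrd),
    S 0 = S₀ ∧
    ∀ n : ℕ, (∃ r ∈ P, r.IsVariant (rv n)) ∧
      Disjoint (rv n).fv S₀.fv ∧ (∀ m < n, Disjoint (rv n).fv (rv m).fv) ∧
      StepWith I (rv n) (S n) (S (n + 1))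

/-! ## Sets of positions, projections, filters -/

/-- The set `[S|τ]` of projected atoms described by the projection of a query on a
set of positions `τ`. -/
def Query.projSet (I : Interp F arF Pc arP D) (τ : ∀ p : Prd, Set (Fin (arPrd p)))
    (S : Query F arF Pc arP Prd arPrd) :
    Set (Σ p : Prd, {i : Fin (arPrd p) // i ∈ τ p} → D) :=
  { a | ∃ v : ℕ → D, S.con.Sat I v ∧ a = ⟨S.p, fun i => (S.args i.1).eval I.fn v⟩ }

/-- The complement `τ̄` of a set of positions. -/
def complPos (τ : ∀ p : Prd, Set (Fin (arPrd p))) : ∀ p : Prd, Set (Fin (arPrd p)) :=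
  fun p => (τ p)ᶜ

/-- A query over a projected predicate `p|τ`. -/
structure PQuery (F : Type) (arF : F → ℕ) (Pc : Type) (arP : Pc → ℕ)
    {Prd : Type} {arPrd : Prd → ℕ} (τ : ∀ p : Prd, Set (Fin (arPrd p))) (p : Prd) where
  args : {i : Fin (arPrd p) // i ∈ τ p} → Tm F arF
  con : Con F arF Pc arP

/-- The set of projected atoms described by a projected query. -/
def PQuery.set (I : Interp F arF Pc arP D) {τ : ∀ p : Prd, Set (Fin (arPrd p))} {p : Prd}
    (Q : PQuery F arF Pc arP τ p) :
    Set (Σ q : Prd, {i : Fin (arPrd q) // i ∈ τ q} → D) :=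
  { a | ∃ v : ℕ → D, Q.con.Sat I v ∧ a = ⟨p, fun i => (Q.args i).eval I.fn v⟩ }

/-- A filter `Δ = (τ, δ)`: a set of positions together with, for each predicate `p`,
a query `δ(p)` over the projected predicate `p|τ` with satisfiable constraint. -/
structure Filt {F : Type} {arF : F → ℕ} {Pc : Type} {arP : Pc → ℕ} {D : Type}
    (I : Interp F arF Pc arP D) (Prd : Type) (arPrd : Prd → ℕ) where
  τ : ∀ p : Prd, Set (Fin (arPrd p))
  δ : ∀ p : Prd, PQuery F arF Pc arP τ p
  δ_sat : ∀ p : Prd, ∃ v : ℕ → D, (δ p).con.Sat I v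

variable {I : Interp F arF Pc arP D}

/-- A query `S` satisfies the filter `Δ` iff `[S|τ] ⊆ [δ(rel(S))]`. -/
def Filt.Satisfies (Δ : Filt I Prd arPrd) (S : Query F arF Pc arP Prd arPrd) : Prop :=
  S.projSet I Δ.τ ⊆ (Δ.δ S.p).set I

/-- `S'` is `Δ`-more general than `S`: `S'|τ̄` is more general than `S|τ̄`
and `S'` satisfies `Δ`. -/
def Filt.DeltaMoreGen (Δ : Filt I Prd arPrd) (S' S : Query F arF Pc arP Prd arPrd) : Prop :=
  S.projSet I (complPos Δ.τ) ⊆ S'.projSet I (complPos Δ.τ) ∧ Δ.Satisfies S'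

/-- `Δ` is derivation neutral (DN) for `r`. -/
def Filt.DN (Δ : Filt I Prd arPrd) (r : Rule F arF Pc arP Prd arPrd) : Prop :=
  ∀ S T, Step I r S T → ∀ S', Δ.DeltaMoreGen S' S →
    ∃ T', Step I r S' T' ∧ Δ.DeltaMoreGen T' T

/-! ## Normalized rules and DNlog -/

/-- A normalized rule `p(X̃) ← c ◇ q(Ỹ)` where `X̃, Ỹ` are disjoint sequences of
distinct variables. -/
structure NRule (F : Type) (arF : F → ℕ) (Pc : Type) (arP : Pc → ℕ)
    (Prd : Type) (arPrd : Prd → ℕ) where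
  hp : Prd
  X : Fin (arPrd hp) → ℕ
  bp : Prd
  Y : Fin (arPrd bp) → ℕ
  hX : Function.Injective X
  hY : Function.Injective Y
  hXY : ∀ i j, X i ≠ Y j
  con : Con F arF Pc arP

/-- The underlying rule of a normalized rule. -/
def NRule.toRule (r : NRule F arF Pc arP Prd arPrd) : Rule F arF Pc arP Prd arPrd :=
  ⟨r.hp, fun i => .var (r.X i), r.con, r.bp, fun i => .var (r.Y i)⟩

/-- `local_var(r) = Var(c) ∖ (Var(X̃) ∪ Var(Ỹ))`. -/
def NRule.localVar (r : NRule F arF Pc arP Prd arPrd) : Set ℕ :=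
  ↑r.con.fv \ (Set.range r.X ∪ Set.range r.Y)

/-- `v` and `w` agree on all variables outside `W`. -/
def agreesOff (W : Set ℕ) (v w : ℕ → D) : Prop := ∀ x ∉ W, v x = w x

/-- Semantics under `v` of the formula `sat(s̃, Q) = ∃_{Var(Q')} (s̃ = ũ' ∧ d')`,
`Q'` a variable-disjoint variant of `Q = ⟨p|τ(ũ) | d⟩`. -/
def satFor (I : Interp F arF Pc arP D) {τ : ∀ p : Prd, Set (Fin (arPrd p))} {p : Prd}
    (s : {i : Fin (arPrd p) // i ∈ τ p} → Tm F arF) (Q : PQuery F arF Pc arP τ p)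
    (v : ℕ → D) : Prop :=
  ∃ w : ℕ → D, Q.con.Sat I w ∧ ∀ i, (s i).eval I.fn v = (Q.args i).eval I.fn w

/-- `Δ` is DNlog for a normalized rule `r = p(X̃) ← c ◇ q(Ỹ)`:
`D_C ⊨ c → ∀_{X̃|τ} [ sat(X̃|τ, δ(p)) → ∃_Y (sat(Ỹ|τ, δ(q)) ∧ c) ]` where
`Y = Var(Ỹ|τ) ∪ local_var(r)`. -/
def Filt.DNlog (Δ : Filt I Prd arPrd) (r : NRule F arF Pc arP Prd arPrd) : Prop :=
  ∀ v : ℕ → D, r.con.Sat I v →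
    ∀ v₁ : ℕ → D, agreesOff (r.X '' Δ.τ r.hp) v₁ v →
      satFor I (fun i => Tm.var (r.X i.1)) (Δ.δ r.hp) v₁ →
        ∃ v₂ : ℕ → D,
          agreesOff (r.Y '' Δ.τ r.bp ∪ r.localVar) v₂ v₁ ∧
          satFor I (fun i => Tm.var (r.Y i.1)) (Δ.δ r.bp) v₂ ∧ r.con.Sat I v₂

/-! ## Flat rules and DNsyn -/

/-- Variables of a sequence of terms. -/
def varsOf {n : ℕ} (s : Fin n → Tm F arF) : Finset ℕ :=
  Finset.univ.biUnion fun i => (s i).fv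

/-- Variables of the projection of a sequence of terms on a set of positions. -/
def varsOfProj {n : ℕ} (σ : Set (Fin n)) (s : Fin n → Tm F arF) : Set ℕ :=
  ⋃ i : {i : Fin n // i ∈ σ}, ↑(s i.1).fv

/-- A flat rule `p(X̃) ← (X̃ = s̃ ∧ Ỹ = t̃) ◇ q(Ỹ)` with `Var(s̃, t̃)` local. -/
structure FlatRule (F : Type) (arF : F → ℕ) (Pc : Type) (arP : Pc → ℕ)
    (Prd : Type) (arPrd : Prd → ℕ) extends NRule F arF Pc arP Prd arPrd where
  s : Fin (arPrd hp) → Tm F arF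
  t : Fin (arPrd bp) → Tm F arF
  con_eq : con = Con.and (argsEqCon (fun i => Tm.var (X i)) s)
                         (argsEqCon (fun i => Tm.var (Y i)) t)
  local_args : ∀ x ∈ varsOf s ∪ varsOf t, x ∉ Set.range X ∪ Set.range Y

/-! ## The constraint domain Term (logic programming) -/

/-- Finite trees (ground terms) over `F`. -/
inductive GTm (F : Type) (arF : F → ℕ) : Type
  | app : (f : F) → (Fin (arF f) → GTm F arF) → GTm F arF

/-- Arities for the empty set of constraint-predicate symbols (only `=` is available). -/
def emptyAr : Empty → ℕ := fun c => c.elim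

/-- The domain of computation of the constraint domain `Term`: the algebra of
finite trees, with no primitive constraints but equality. -/
def termInterp (F : Type) (arF : F → ℕ) : Interp F arF Empty emptyAr (GTm F arF) :=
  ⟨fun f ts => GTm.app f ts, fun c => c.elim⟩

/- Rename the input rule apart from `S'` by a permutation `σ`. A solution `v` of
`s̃' = ũ ∧ c' ∧ d` yields, through `[S] ⊆ [S']`, a solution `w` of the constraint of `S'`
with the same atom. As the renamed rule and `S'` share no variables, `v ∘ σ⁻¹` and `w`
glue into one solution of the new step's constraint, whose body atom is the one of `v`. -/

theorem Tm.fv_rename (σ : ℕ → ℕ) (t : Tm F arF) : (t.rename σ).fv = t.fv.image σ := by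
  induction t with
  | var x => simp [Tm.rename, Tm.fv]
  | app f ts ih => simp only [Tm.rename, Tm.fv, ih, Finset.biUnion_image]

theorem Con.fv_rename (σ : ℕ → ℕ) (c : Con F arF Pc arP) :
    (c.rename σ).fv = c.fv.image σ := by
  induction c with
  | tru => simp [Con.rename, Con.fv]
  | eq s t => simp [Con.rename, Con.fv, Tm.fv_rename, Finset.image_union]
  | prim c ts => simp only [Con.rename, Con.fv, Tm.fv_rename, Finset.biUnion_image]
  | and c d ihc ihd => simp [Con.rename, Con.fv, Finset.image_union, ihc, ihd]

theorem Rule.fv_rename (σ : ℕ → ℕ) (r : Rule F arF Pc arP Prd arPrd) :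
    (r.rename σ).fv = r.fv.image σ := by
  simp only [Rule.rename, Rule.fv, Tm.fv_rename, Con.fv_rename, Finset.image_union,
    Finset.biUnion_image]
  rfl

theorem Tm.rename_comp (σ ρ : ℕ → ℕ) (t : Tm F arF) :
    (t.rename ρ).rename σ = t.rename (σ ∘ ρ) := by
  induction t with
  | var x => rfl
  | app f ts ih => simp [Tm.rename, ih]

theorem Con.rename_comp (σ ρ : ℕ → ℕ) (c : Con F arF Pc arP) :
    (c.rename ρ).rename σ = c.rename (σ ∘ ρ) := by
  induction c with
  | tru => rfl
  | eq s t => simp [Con.rename, Tm.rename_comp]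
  | prim c ts => simp [Con.rename, Tm.rename_comp]
  | and c d ihc ihd => simp [Con.rename, ihc, ihd]

theorem Rule.rename_comp (σ ρ : ℕ → ℕ) (r : Rule F arF Pc arP Prd arPrd) :
    (r.rename ρ).rename σ = r.rename (σ ∘ ρ) := by
  simp [Rule.rename, Tm.rename_comp, Con.rename_comp]

theorem Rule.IsVariant.rename {r r' : Rule F arF Pc arP Prd arPrd} (h : r.IsVariant r')
    (σ : ℕ ≃ ℕ) : r.IsVariant (r'.rename σ) := by
  obtain ⟨ρ, rfl⟩ := h
  exact ⟨ρ.trans σ, Rule.rename_comp σ ρ r⟩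

theorem Tm.eval_rename (If : (f : F) → (Fin (arF f) → D) → D) (v : ℕ → D) (σ : ℕ → ℕ)
    (t : Tm F arF) : (t.rename σ).eval If v = t.eval If (v ∘ σ) := by
  induction t with
  | var x => rfl
  | app f ts ih => simp [Tm.rename, Tm.eval, ih]

theorem Con.sat_rename (v : ℕ → D) (σ : ℕ → ℕ) (c : Con F arF Pc arP) :
    (c.rename σ).Sat I v ↔ c.Sat I (v ∘ σ) := by
  induction c with
  | tru => rfl
  | eq s t => simp [Con.rename, Con.Sat, Tm.eval_rename]
  | prim c ts => simp [Con.rename, Con.Sat, Tm.eval_rename]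
  | and c d ihc ihd => simp [Con.rename, Con.Sat, ihc, ihd]

theorem Tm.eval_congr (If : (f : F) → (Fin (arF f) → D) → D) {v w : ℕ → D} (t : Tm F arF)
    (h : Set.EqOn v w t.fv) : t.eval If v = t.eval If w := by
  induction t with
  | var x => exact h (by simp [Tm.fv])
  | app f ts ih =>
    simp only [Tm.eval]
    congr 1
    funext i
    exact ih i (h.mono (by simp [Tm.fv, Set.subset_def]; exact fun x hx => ⟨i, hx⟩))

theorem Tm.eval_congr_of_varsOf (If : (f : F) → (Fin (arF f) → D) → D) {v w : ℕ → D} {n : ℕ}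
    (s : Fin n → Tm F arF) (h : Set.EqOn v w (varsOf s)) (i : Fin n) :
    (s i).eval If v = (s i).eval If w :=
  Tm.eval_congr If (s i) (h.mono (by simp [varsOf, Set.subset_def]; exact fun x hx => ⟨i, hx⟩))

theorem Con.sat_congr {v w : ℕ → D} (c : Con F arF Pc arP) (h : Set.EqOn v w c.fv) :
    c.Sat I v ↔ c.Sat I w := by
  induction c with
  | tru => rfl
  | eq s t =>
    simp only [Con.Sat]
    rw [Tm.eval_congr I.fn s (h.mono (by simp [Con.fv])),
      Tm.eval_congr I.fn t (h.mono (by simp [Con.fv]))]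
  | prim c ts =>
    simp only [Con.Sat]
    rw [funext (Tm.eval_congr_of_varsOf I.fn ts h)]
  | and c d ihc ihd =>
    simp only [Con.Sat]
    rw [ihc (h.mono (by simp [Con.fv])), ihd (h.mono (by simp [Con.fv]))]

theorem argsEqCon_sat (v : ℕ → D) {n : ℕ} (u w : Fin n → Tm F arF) :
    (argsEqCon (Pc := Pc) (arP := arP) u w).Sat I v ↔
      ∀ i, (u i).eval I.fn v = (w i).eval I.fn v := by
  have foldr_sat : ∀ l : List (Con F arF Pc arP),
      (l.foldr Con.and Con.tru).Sat I v ↔ ∀ c ∈ l, c.Sat I v := by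
    intro l
    induction l with
    | nil => simp [Con.Sat]
    | cons c l ih => simp [Con.Sat, ih]
  simp [argsEqCon, foldr_sat, List.mem_ofFn, Con.Sat]

def evalAtom (I : Interp F arF Pc arP D) {p : Prd} (args : Fin (arPrd p) → Tm F arF)
    (v : ℕ → D) : Σ p : Prd, Fin (arPrd p) → D :=
  ⟨p, fun i => (args i).eval I.fn v⟩

theorem evalAtom_rename {p : Prd} (args : Fin (arPrd p) → Tm F arF) (σ : ℕ → ℕ) (v : ℕ → D) :
    evalAtom I (fun i => (args i).rename σ) v = evalAtom I args (v ∘ σ) := by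
  simp [evalAtom, Tm.eval_rename]

theorem evalAtom_congr {p : Prd} (args : Fin (arPrd p) → Tm F arF) {v w : ℕ → D}
    (h : Set.EqOn v w (varsOf args)) : evalAtom I args v = evalAtom I args w := by
  simp only [evalAtom, funext (Tm.eval_congr_of_varsOf I.fn args h)]

theorem stepCon_sat_iff (r : Rule F arF Pc arP Prd arPrd) (S : Query F arF Pc arP Prd arPrd)
    (h : r.hp = S.p) (v : ℕ → D) :
    (stepCon r S h).Sat I v ↔
      evalAtom I r.hargs v = evalAtom I S.args v ∧ r.con.Sat I v ∧ S.con.Sat I v := by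
  obtain ⟨p, hargs, c, bp, bargs⟩ := r
  obtain ⟨q, args, d⟩ := S
  dsimp only at h
  subst h
  simp [stepCon, Con.Sat, argsEqCon_sat, evalAtom, funext_iff]

theorem MoreGen.p_eq {S' S : Query F arF Pc arP Prd arPrd} (hmg : MoreGen I S' S)
    (hS : ∃ v, S.con.Sat I v) : S'.p = S.p := by
  obtain ⟨v, hv⟩ := hS
  obtain ⟨w, -, hw⟩ := hmg ⟨v, hv, rfl⟩
  exact (congrArg Sigma.fst hw).symm

theorem Rule.varsOf_hargs_subset_fv (r : Rule F arF Pc arP Prd arPrd) :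
    varsOf r.hargs ⊆ r.fv :=
  Finset.subset_union_left.trans Finset.subset_union_left

theorem Rule.con_fv_subset_fv (r : Rule F arF Pc arP Prd arPrd) : r.con.fv ⊆ r.fv :=
  Finset.subset_union_right.trans Finset.subset_union_left

theorem Rule.varsOf_bargs_subset_fv (r : Rule F arF Pc arP Prd arPrd) :
    varsOf r.bargs ⊆ r.fv :=
  Finset.subset_union_right

theorem Query.varsOf_args_subset_fv (S : Query F arF Pc arP Prd arPrd) :
    varsOf S.args ⊆ S.fv :=
  Finset.subset_union_left

theorem Query.con_fv_subset_fv (S : Query F arF Pc arP Prd arPrd) : S.con.fv ⊆ S.fv :=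
  Finset.subset_union_right

theorem exists_stepCon_sat_rename_of_moreGen {r : Rule F arF Pc arP Prd arPrd}
    {S S' : Query F arF Pc arP Prd arPrd} (hmg : MoreGen I S' S) (σ : ℕ ≃ ℕ)
    (hdisj : Disjoint (r.rename σ).fv S'.fv) (h : r.hp = S.p) (h' : (r.rename σ).hp = S'.p)
    {v : ℕ → D} (hv : (stepCon r S h).Sat I v) :
    ∃ u, (stepCon (r.rename σ) S' h').Sat I u ∧
      evalAtom I (r.rename σ).bargs u = evalAtom I r.bargs v := by
  rw [stepCon_sat_iff] at hv
  obtain ⟨hhead, hc, hd⟩ := hv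
  obtain ⟨w, hw, hvw⟩ := hmg ⟨v, hd, rfl⟩
  set u := (r.rename σ).fv.piecewise (v ∘ σ.symm) w
  have hu_rule : Set.EqOn u (v ∘ σ.symm) (r.rename σ).fv := fun _ hx =>
    Finset.piecewise_eq_of_mem _ _ _ hx
  have hu_query : Set.EqOn u w S'.fv := fun _ hx =>
    Finset.piecewise_eq_of_notMem _ _ _ (Finset.disjoint_right.1 hdisj hx)
  have hvσ : (v ∘ σ.symm) ∘ σ = v := by ext; simp
  refine ⟨u, (stepCon_sat_iff _ _ _ _).2 ⟨?_, ?_, ?_⟩, ?_⟩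
  · calc evalAtom I (r.rename σ).hargs u = evalAtom I r.hargs v := by
          rw [evalAtom_congr _
            (hu_rule.mono (Finset.coe_subset.2 (r.rename σ).varsOf_hargs_subset_fv))]
          exact (evalAtom_rename _ _ _).trans (congrArg _ hvσ)
      _ = evalAtom I S.args v := hhead
      _ = evalAtom I S'.args w := hvw
      _ = evalAtom I S'.args u :=
          (evalAtom_congr _ (hu_query.mono (Finset.coe_subset.2 S'.varsOf_args_subset_fv))).symm
  · rw [Con.sat_congr _ (hu_rule.mono (Finset.coe_subset.2 (r.rename σ).con_fv_subset_fv))]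
    exact (Con.sat_rename _ _ _).2 (by rwa [hvσ])
  · exact (Con.sat_congr _ (hu_query.mono (Finset.coe_subset.2 S'.con_fv_subset_fv))).2 hw
  · rw [evalAtom_congr _ (hu_rule.mono (Finset.coe_subset.2 (r.rename σ).varsOf_bargs_subset_fv))]
    exact (evalAtom_rename _ _ _).trans (congrArg _ hvσ)

theorem StepWith.lift {r : Rule F arF Pc arP Prd arPrd} {S T S' : Query F arF Pc arP Prd arPrd}
    (hstep : StepWith I r S T) (hmg : MoreGen I S' S) (σ : ℕ ≃ ℕ)
    (hdisj : Disjoint (r.rename σ).fv S'.fv) :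
    ∃ T', StepWith I (r.rename σ) S' T' ∧ MoreGen I T' T := by
  obtain ⟨h, ⟨v, hv⟩, rfl⟩ := hstep
  have h' : (r.rename σ).hp = S'.p :=
    h.trans (hmg.p_eq ⟨v, ((stepCon_sat_iff r S h v).1 hv).2.2⟩).symm
  obtain ⟨u, hu, -⟩ := exists_stepCon_sat_rename_of_moreGen hmg σ hdisj h h' hv
  refine ⟨_, ⟨h', ⟨u, hu⟩, rfl⟩, ?_⟩
  rintro _ ⟨v, hv, rfl⟩
  obtain ⟨u, hu, hatom⟩ := exists_stepCon_sat_rename_of_moreGen hmg σ hdisj h h' hv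
  exact ⟨u, hu, hatom.symm⟩

theorem exists_perm_disjoint_image (A B : Finset ℕ) : ∃ σ : ℕ ≃ ℕ, Disjoint (A.image σ) B := by
  obtain ⟨N, hN⟩ := (A ∪ B).exists_nat_subset_range
  -- swap the blocks `[0, N)` and `[N, 2N)`; the first one contains `A ∪ B`
  let σ : ℕ → ℕ := fun x => if x < N then x + N else if x < 2 * N then x - N else x
  have hσ : Function.Involutive σ := by
    intro x
    simp only [σ]
    split_ifs <;> omega
  refine ⟨hσ.toPerm, Finset.disjoint_left.2 ?_⟩
  rintro _ hy hyB
  obtain ⟨x, hx, rfl⟩ := Finset.mem_image.1 hy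
  have hxN := Finset.mem_range.1 (hN (Finset.mem_union_left B hx))
  have hσxN := Finset.mem_range.1 (hN (Finset.mem_union_right A hyB))
  simp only [Function.Involutive.coe_toPerm, σ, if_pos hxN] at hσxN
  omega

end CLP

open CLP in
/-- Lifting: if `S ⟹_r T` and `S'` is more general than `S`, then
there is a step `S' ⟹_r T'` with `T'` more general than `T`. -/
theorem stmt4 {F : Type} {arF : F → ℕ} {Pc : Type} {arP : Pc → ℕ}
    {Prd : Type} {arPrd : Prd → ℕ} {D : Type} (I : Interp F arF Pc arP D)
    (r : Rule F arF Pc arP Prd arPrd) (S T S' : Query F arF Pc arP Prd arPrd)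
    (hstep : Step I r S T) (hmg : MoreGen I S' S) :
    ∃ T', Step I r S' T' ∧ MoreGen I T' T := by
  obtain ⟨r', hvar, -, hstep'⟩ := hstep
  obtain ⟨σ, hσ⟩ := exists_perm_disjoint_image r'.fv S'.fv
  rw [← Rule.fv_rename] at hσ
  obtain ⟨T', hT', hmg'⟩ := hstep'.lift hmg σ hσ
  exact ⟨T', ⟨r'.rename σ, hvar.rename σ, hσ, hT'⟩, hmg'⟩
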